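/- arXiv:1110.4962 — 5 statements merged into one kernel-verified Lean document; each statement's English description precedes it below -/
import Mathlib

section
/- If (t_n)_{n=0}^∞ is a probability sequence satisfying Σ_{n=0}^∞ n·t_n < ∞, then the series Σ_{n=0}^∞ t_n ln t_n is convergent (equivalently, the sequence (t_n ln t_n)_{n=0}^∞ is summable, with the convention 0·ln 0 = 0). -/
/-!
The function `-x ln x - a x` attains its maximum `e^{-(a+1)}` on `[0, ∞)`, so taking `a = n`
gives `|t_n ln t_n| ≤ n |t_n| + e^{-(n+1)}` as soon as `|t_n| ≤ 1`. The first moment makes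
the right-hand side summable, and forces `t_n → 0`, so the bound holds for all large `n`.
-/

open Filter Real

namespace Real

lemma negMulLog_le_mul_add_exp {x : ℝ} (hx : 0 ≤ x) (a : ℝ) :
    negMulLog x ≤ a * x + exp (-(a + 1)) := by
  rcases hx.eq_or_lt with rfl | hx
  · simpa using (exp_pos _).le
  -- `log y ≤ y - 1` at `y = e^{-(a+1)} / x`
  have key := log_le_sub_one_of_pos (div_pos (exp_pos (-(a + 1))) hx)
  rw [log_div (exp_pos _).ne' hx.ne', log_exp, le_sub_iff_add_le, ← mul_le_mul_iff_of_pos_left hx,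
    mul_div_cancel₀ _ hx.ne'] at key
  rw [negMulLog]
  linarith

lemma norm_mul_log_eq_negMulLog_abs {x : ℝ} (hx : |x| ≤ 1) : ‖x * log x‖ = negMulLog |x| := by
  rw [Real.norm_eq_abs, abs_mul, ← log_abs, abs_of_nonpos (log_nonpos (abs_nonneg x) hx),
    negMulLog]
  ring

end Real

lemma summable_of_summable_nat_mul {f : ℕ → ℝ} (h : Summable fun n : ℕ => (n : ℝ) * f n) :
    Summable f := by
  refine .of_norm_bounded_eventually_nat h.abs (eventually_atTop.2 ⟨1, fun n hn => ?_⟩)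
  rw [Real.norm_eq_abs, abs_mul, Nat.abs_cast]
  exact le_mul_of_one_le_left (abs_nonneg _) (by exact_mod_cast hn)

lemma summable_mul_log_of_summable_nat_mul {t : ℕ → ℝ} (h : Summable fun n : ℕ => (n : ℝ) * t n) :
    Summable fun n => t n * log (t n) := by
  have hsmall : ∀ᶠ n in atTop, |t n| ≤ 1 :=
    (summable_of_summable_nat_mul h).tendsto_atTop_zero.abs.eventually (ge_mem_nhds (by norm_num))
  have hexp : Summable fun n : ℕ => exp (-((n : ℝ) + 1)) :=
    (summable_nat_add_iff 1).2 summable_exp_neg_nat |>.congr fun n => by push_cast; rfl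
  refine .of_norm_bounded_eventually_nat (h.abs.add hexp) (hsmall.mono fun n hn => ?_)
  rw [norm_mul_log_eq_negMulLog_abs hn, abs_mul, Nat.abs_cast]
  exact negMulLog_le_mul_add_exp (abs_nonneg _) n

theorem stmt2_general (t : ℕ → ℝ)
    (hmom : Summable (fun n : ℕ => (n : ℝ) * t n)) :
    Summable (fun n => t n * Real.log (t n)) :=
  summable_mul_log_of_summable_nat_mul hmom

/-- If `t` is a probability sequence with finite first moment
`Σ n·t_n < ∞`, then the entropy series `Σ t_n ln t_n` is convergent (summable);
the convention `0 · ln 0 = 0` holds automatically since `Real.log 0 = 0`. -/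
theorem stmt2 (t : ℕ → ℝ) (ht0 : ∀ n, 0 ≤ t n) (ht1 : HasSum t 1)
    (hmom : Summable (fun n : ℕ => (n : ℝ) * t n)) :
    Summable (fun n => t n * Real.log (t n)) :=
  stmt2_general t hmom
end

section
/- Define t_n = 6/(π²·n²) for n ≥ 1 (and t_0 = 0). Then (t_n) is a probability sequence, the series Σ_{n=1}^∞ n·t_n = Σ_{n=1}^∞ 6/(π²·n) is divergent, yet the series Σ_{n=1}^∞ t_n ln t_n is convergent, with Σ_{n=1}^∞ t_n ln t_n = ln(6/π²) − (12/π²)·Σ_{n=1}^∞ (ln n)/n². In particular, the condition Σ n·t_n < ∞ is sufficient but not necessary for convergence of the entropy series Σ t_n ln t_n. -/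
/-! Up to the normalising constant `c = 6/π²`, `t_n = c/n²`, so `n t_n = c/n` is the harmonic
series, while `t_n ln t_n = ln c · t_n − 2c · (ln n)/n²` splits the entropy series into the mass
`Σ t_n = 1` and the convergent series `Σ (ln n)/n²` (as `ln n ≤ n^ε/ε`). -/

open Real

lemma summable_log_div_rpow {p : ℝ} (hp : 1 < p) :
    Summable fun n : ℕ => log n / (n : ℝ) ^ p := by
  set ε := (p - 1) / 2
  have hε : 0 < ε := by simp only [ε]; linarith
  have hdom : Summable fun n : ℕ => ε⁻¹ * ((n : ℝ) ^ (p - ε))⁻¹ :=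
    (summable_nat_rpow_inv.mpr (by simp only [ε]; linarith)).mul_left _
  refine hdom.of_nonneg_of_le (fun n => div_nonneg (log_natCast_nonneg n) (by positivity))
    fun n => ?_
  rcases n.eq_zero_or_pos with rfl | hn
  · simp only [CharP.cast_eq_zero, log_zero, zero_div]; positivity
  have hn' : (0 : ℝ) < n := by exact_mod_cast hn
  calc log n / (n : ℝ) ^ p ≤ (n : ℝ) ^ ε / ε / (n : ℝ) ^ p := by
        gcongr; exact log_le_rpow_div hn'.le hε
    _ = ε⁻¹ * ((n : ℝ) ^ (p - ε))⁻¹ := by rw [rpow_sub hn']; field_simp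

lemma summable_log_div_sq : Summable fun n : ℕ => log n / (n : ℝ) ^ 2 := by
  simpa only [rpow_natCast] using summable_log_div_rpow (p := (2 : ℕ)) (by norm_num)

lemma not_summable_natCast_mul_div_sq {c : ℝ} (hc : c ≠ 0) :
    ¬ Summable fun n : ℕ => (n : ℝ) * (c / (n : ℝ) ^ 2) := by
  intro h
  refine not_summable_natCast_inv ((h.mul_left c⁻¹).congr fun n => ?_)
  rcases eq_or_ne (n : ℝ) 0 with hn | hn
  · simp [hn]
  · field_simp

section InverseSquare

variable (c : ℝ)

lemma hasSum_div_sq : HasSum (fun n : ℕ => c / (n : ℝ) ^ 2) (c * (π ^ 2 / 6)) := by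
  simpa only [mul_one_div] using hasSum_zeta_two.mul_left c

lemma div_sq_mul_log_div_sq (n : ℕ) :
    c / (n : ℝ) ^ 2 * log (c / (n : ℝ) ^ 2)
      = log c * (c / (n : ℝ) ^ 2) - 2 * c * (log n / (n : ℝ) ^ 2) := by
  rcases eq_or_ne c 0 with rfl | hc
  · simp
  rcases eq_or_ne (n : ℝ) 0 with hn | hn
  · simp [hn]
  rw [log_div hc (by positivity), log_pow]
  push_cast
  ring

lemma hasSum_div_sq_mul_log_div_sq :
    HasSum (fun n : ℕ => c / (n : ℝ) ^ 2 * log (c / (n : ℝ) ^ 2))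
      (log c * (c * (π ^ 2 / 6)) - 2 * c * ∑' n : ℕ, log n / (n : ℝ) ^ 2) := by
  simpa only [← div_sq_mul_log_div_sq] using
    ((hasSum_div_sq c).mul_left (log c)).sub (summable_log_div_sq.hasSum.mul_left (2 * c))

end InverseSquare

/-- With `t_n = 6/(π²·n²)` for `n ≥ 1` and `t_0 = 0`, the sequence `t` is a
probability sequence, the first-moment series `Σ n·t_n` diverges, yet the entropy series
`Σ t_n ln t_n` converges, with sum `ln(6/π²) − (12/π²)·Σ (ln n)/n²`.  (The terms for
`n = 0` of the series on the right vanish, so full `tsum`s over `ℕ` are used.) -/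
theorem stmt3 (t : ℕ → ℝ)
    (ht : ∀ n : ℕ, t n = if n = 0 then 0 else 6 / (Real.pi ^ 2 * (n : ℝ) ^ 2)) :
    (∀ n, 0 ≤ t n) ∧ HasSum t 1 ∧
    ¬ Summable (fun n : ℕ => (n : ℝ) * t n) ∧
    Summable (fun n => t n * Real.log (t n)) ∧
    ∑' n, t n * Real.log (t n)
      = Real.log (6 / Real.pi ^ 2)
        - (12 / Real.pi ^ 2) * ∑' n : ℕ, Real.log n / (n : ℝ) ^ 2 := by
  obtain rfl : t = fun n : ℕ => 6 / π ^ 2 / (n : ℝ) ^ 2 := by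
    funext n
    rw [ht]
    split_ifs with hn <;> simp [hn, div_div]
  have hmass : 6 / π ^ 2 * (π ^ 2 / 6) = 1 := by field_simp
  refine ⟨fun n => by positivity, hmass ▸ hasSum_div_sq _,
    not_summable_natCast_mul_div_sq (by positivity), (hasSum_div_sq_mul_log_div_sq _).summable, ?_⟩
  rw [(hasSum_div_sq_mul_log_div_sq _).tsum_eq, hmass]
  ring
end

section
/- Let r ∈ (0,1). Then −ln(1−r) equals the maximum over all probability sequences (t_n) of limsup_{N→∞} Σ_{n=0}^N (n·t_n·ln r − t_n ln t_n), and this maximum is attained at the geometric distribution t_n = (1−r)·r^n, for which moreover Σ_{n=0}^∞ n·t_n = r/(1−r) < ∞ and the partial sums Σ_{n=0}^N (n·t_n·ln r − t_n ln t_n) converge to −ln(1−r). -/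
/-!
Against the geometric weights `q n = (1 - r) rⁿ`, for which `log (q n) = log (1 - r) + n log r`,
Gibbs' inequality `t log q - t log t ≤ q - t` turns each term of the `N`-th partial sum into at most
`q n - t n - t n log (1 - r)`. Hence the partial sum is at most `1 - S_N - log (1 - r) S_N`, where
`S_N → 1` is the partial sum of `t`, and the limsup is at most `-log (1 - r)`. For `t = q` every term
equals `-log (1 - r) q n`, so the partial sums converge to this bound.
-/

open Filter Finset Real

noncomputable def weightedEntropySum (r : ℝ) (t : ℕ → ℝ) (N : ℕ) : ℝ :=
  ∑ n ∈ range (N + 1), ((n : ℝ) * t n * log r - t n * log (t n))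

lemma Real.mul_log_sub_mul_log_le_sub {t q : ℝ} (ht : 0 ≤ t) (hq : 0 < q) :
    t * log q - t * log t ≤ q - t := by
  obtain rfl | ht := ht.eq_or_lt
  · simpa using hq.le
  calc t * log q - t * log t = t * log (q / t) := by rw [log_div hq.ne' ht.ne']; ring
    _ ≤ t * (q / t - 1) := mul_le_mul_of_nonneg_left (log_le_sub_one_of_pos (div_pos hq ht)) ht.le
    _ = q - t := by field_simp

/-- In `ℝ` a sequence that is not bounded below has `limsup` equal to the junk value `0`,
hence the hypothesis `0 ≤ L`. -/
lemma Real.limsup_le_of_le_of_tendsto {ι : Type*} {f : Filter ι} {u v : ι → ℝ} {L : ℝ}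
    (hL : 0 ≤ L) (huv : ∀ᶠ i in f, u i ≤ v i) (hv : Tendsto v f (nhds L)) :
    limsup u f ≤ L := by
  rw [limsup_eq]
  by_cases hB : BddBelow {a | ∀ᶠ i in f, u i ≤ a}
  · refine le_of_forall_pos_le_add fun ε hε => csInf_le hB ?_
    filter_upwards [huv, hv.eventually_le_const (by linarith : L < L + ε)] with i hi hvi
    exact hi.trans hvi
  · rw [Real.sInf_of_not_bddBelow hB]
    exact hL

lemma HasSum.tendsto_sum_range_succ {f : ℕ → ℝ} {a : ℝ} (hf : HasSum f a) :
    Tendsto (fun N => ∑ n ∈ range (N + 1), f n) atTop (nhds a) :=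
  hf.tendsto_sum_nat.comp (tendsto_add_atTop_nat 1)

section Geometric

variable {r : ℝ}

lemma log_geometric (hr₀ : r ≠ 0) (hr₁ : 1 - r ≠ 0) (n : ℕ) :
    log ((1 - r) * r ^ n) = log (1 - r) + n * log r := by
  rw [log_mul hr₁ (pow_ne_zero n hr₀), log_pow]

lemma hasSum_geometric_distribution (hr : |r| < 1) : HasSum (fun n : ℕ => (1 - r) * r ^ n) 1 := by
  have h1r : 1 - r ≠ 0 := by linarith [le_abs_self r]
  simpa [mul_inv_cancel₀ h1r] using (hasSum_geometric_of_abs_lt_one hr).mul_left (1 - r)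

lemma hasSum_coe_mul_geometric_distribution (hr : |r| < 1) :
    HasSum (fun n : ℕ => (n : ℝ) * ((1 - r) * r ^ n)) (r / (1 - r)) := by
  have h1r : 1 - r ≠ 0 := by linarith [le_abs_self r]
  have h := (hasSum_coe_mul_geometric_of_norm_lt_one (𝕜 := ℝ) hr).mul_left (1 - r)
  rw [show (1 - r) * (r / (1 - r) ^ 2) = r / (1 - r) by field_simp] at h
  exact h.congr_fun fun n => by ring

lemma tendsto_weightedEntropySum_geometric (hr₀ : r ≠ 0) (hr : |r| < 1) :
    Tendsto (weightedEntropySum r fun n => (1 - r) * r ^ n) atTop (nhds (-log (1 - r))) := by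
  have h1r : 1 - r ≠ 0 := by linarith [le_abs_self r]
  have hterm : ∀ n : ℕ, (n : ℝ) * ((1 - r) * r ^ n) * log r
      - (1 - r) * r ^ n * log ((1 - r) * r ^ n) = -log (1 - r) * ((1 - r) * r ^ n) := fun n => by
    rw [log_geometric hr₀ h1r]; ring
  have h := ((hasSum_geometric_distribution hr).mul_left (-log (1 - r))).tendsto_sum_range_succ
  rw [mul_one] at h
  exact h.congr fun N => by simp only [weightedEntropySum, hterm]

lemma entropyTerm_le_geometric (hr : r ∈ Set.Ioo 0 1) {t : ℝ} (ht : 0 ≤ t) (n : ℕ) :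
    (n : ℝ) * t * log r - t * log t ≤ (1 - r) * r ^ n - t - t * log (1 - r) := by
  obtain ⟨hr₀, hr₁⟩ := hr
  have hq : 0 < (1 - r) * r ^ n := mul_pos (by linarith) (pow_pos hr₀ n)
  have h := mul_log_sub_mul_log_le_sub ht hq
  rw [log_geometric hr₀.ne' (by linarith)] at h
  linarith

lemma weightedEntropySum_le (hr : r ∈ Set.Ioo 0 1) {t : ℕ → ℝ} (ht : ∀ n, 0 ≤ t n) (N : ℕ) :
    weightedEntropySum r t N
      ≤ 1 - ∑ n ∈ range (N + 1), t n - log (1 - r) * ∑ n ∈ range (N + 1), t n := by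
  have hq : ∑ n ∈ range (N + 1), (1 - r) * r ^ n ≤ 1 :=
    sum_le_hasSum _ (fun n _ => mul_nonneg (by linarith [hr.2]) (pow_nonneg hr.1.le n))
      (hasSum_geometric_distribution (abs_lt.2 ⟨by linarith [hr.1], hr.2⟩))
  calc weightedEntropySum r t N
      ≤ ∑ n ∈ range (N + 1), ((1 - r) * r ^ n - t n - t n * log (1 - r)) :=
        sum_le_sum fun n _ => entropyTerm_le_geometric hr (ht n) n
    _ = ∑ n ∈ range (N + 1), (1 - r) * r ^ n - ∑ n ∈ range (N + 1), t n
          - log (1 - r) * ∑ n ∈ range (N + 1), t n := by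
        rw [sum_sub_distrib, sum_sub_distrib, mul_sum]
        simp only [mul_comm]
    _ ≤ _ := by linarith

lemma limsup_weightedEntropySum_le (hr : r ∈ Set.Ioo 0 1) {t : ℕ → ℝ} (ht₀ : ∀ n, 0 ≤ t n)
    (ht : HasSum t 1) : limsup (weightedEntropySum r t) atTop ≤ -log (1 - r) := by
  have hL : 0 ≤ -log (1 - r) := neg_nonneg.2 (log_nonpos (by linarith [hr.2]) (by linarith [hr.1]))
  refine limsup_le_of_le_of_tendsto hL (Eventually.of_forall (weightedEntropySum_le hr ht₀)) ?_
  simpa using ((tendsto_const_nhds (x := (1 : ℝ))).sub ht.tendsto_sum_range_succ).sub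
    (ht.tendsto_sum_range_succ.const_mul (log (1 - r)))

end Geometric

/-- For `r ∈ (0,1)`, `−ln(1−r)` is the maximum over all probability sequences
`t` of `limsup_N Σ_{n=0}^N (n t_n ln r − t_n ln t_n)`, attained at the geometric
distribution `t_n = (1−r) rⁿ`; moreover for the geometric distribution
`Σ n t_n = r/(1−r)` (finite) and the partial sums converge to `−ln(1−r)`. -/
theorem stmt6 (r : ℝ) (hr : r ∈ Set.Ioo (0 : ℝ) 1) :
    IsGreatest
      {x : ℝ | ∃ t : ℕ → ℝ, (∀ n, 0 ≤ t n) ∧ HasSum t 1 ∧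
        x = Filter.limsup
          (fun N => ∑ n ∈ Finset.range (N + 1),
            ((n : ℝ) * t n * Real.log r - t n * Real.log (t n))) Filter.atTop}
      (-Real.log (1 - r)) ∧
    (∀ n, 0 ≤ (1 - r) * r ^ n) ∧
    HasSum (fun n : ℕ => (1 - r) * r ^ n) 1 ∧
    HasSum (fun n : ℕ => (n : ℝ) * ((1 - r) * r ^ n)) (r / (1 - r)) ∧
    Filter.Tendsto
      (fun N => ∑ n ∈ Finset.range (N + 1),
        ((n : ℝ) * ((1 - r) * r ^ n) * Real.log r
          - ((1 - r) * r ^ n) * Real.log ((1 - r) * r ^ n)))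
      Filter.atTop (nhds (-Real.log (1 - r))) := by
  have habs : |r| < 1 := abs_lt.2 ⟨by linarith [hr.1], hr.2⟩
  have hnonneg : ∀ n, 0 ≤ (1 - r) * r ^ n := fun n =>
    mul_nonneg (by linarith [hr.2]) (pow_nonneg hr.1.le n)
  have hgeom := hasSum_geometric_distribution habs
  have hlim := tendsto_weightedEntropySum_geometric hr.1.ne' habs
  refine ⟨⟨⟨_, hnonneg, hgeom, hlim.limsup_eq.symm⟩, ?_⟩, hnonneg, hgeom,
    hasSum_coe_mul_geometric_distribution habs, hlim⟩
  rintro x ⟨t, ht₀, ht, rfl⟩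
  exact limsup_weightedEntropySum_le hr ht₀ ht
end

section
/- Let (c_n) be a bounded real sequence and r ∈ (0,1). Then ln(Σ_{n=0}^∞ e^{c_n} r^n) equals the maximum, over all probability sequences (t_n) with Σ_{n=0}^∞ n·t_n < ∞, of Σ_{n=0}^∞ c_n·t_n + (ln r)·Σ_{n=0}^∞ n·t_n − Σ_{n=0}^∞ t_n ln t_n (all three series being convergent for such (t_n)). The maximum is attained at t_n = e^{c_n} r^n / f_c(r), where f_c(r) = Σ_{m=0}^∞ e^{c_m} r^m. -/
/-!
With `w n = e^{c n} rⁿ`, so that `log w n = c n + n log r`, the functional is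
`∑ t n log w n - ∑ t n log t n`. Gibbs' inequality `t log s - t log t ≤ s - t` applied with
`s = w n / F` and summed over `n` bounds it by `log F`; for `t = w / F` every term
`t n log w n - t n log t n` equals `t n log F`, so the bound is attained.
-/

open Real

lemma mul_log_sub_mul_log_le {s t : ℝ} (ht : 0 ≤ t) (hs : 0 < s) :
    t * log s - t * log t ≤ s - t := by
  rcases ht.eq_or_lt with rfl | ht
  · simpa using hs.le
  have h := mul_le_mul_of_nonneg_left (log_le_sub_one_of_pos (div_pos hs ht)) ht.le
  rw [log_div hs.ne' ht.ne', mul_sub_one, mul_div_cancel₀ _ ht.ne'] at h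
  linarith

section Gibbs

variable {ι : Type*} {w t : ι → ℝ} {F : ℝ}

lemma HasSum.nonempty_of_ne_zero {α : Type*} [AddCommMonoid α] [TopologicalSpace α] [T2Space α]
    {f : ι → α} {a : α} (ha : HasSum f a) (h : a ≠ 0) : Nonempty ι := by
  by_contra hι
  rw [not_nonempty_iff] at hι
  exact h (ha.unique hasSum_empty)

lemma HasSum.pos [Nonempty ι] (hwF : HasSum w F) (hw : ∀ i, 0 < w i) : 0 < F :=
  hwF.tsum_eq ▸ hwF.summable.tsum_pos (fun i => (hw i).le) (Classical.arbitrary ι)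
    (hw _)

lemma HasSum.div_const_self (hwF : HasSum w F) (hF : F ≠ 0) :
    HasSum (fun i => w i / F) 1 := by
  simpa [div_self hF] using hwF.div_const F

theorem tsum_mul_log_sub_tsum_mul_log_le (hw : ∀ i, 0 < w i) (hwF : HasSum w F)
    (ht : ∀ i, 0 ≤ t i) (ht1 : HasSum t 1) (htw : Summable fun i => t i * log (w i))
    (htt : Summable fun i => t i * log (t i)) :
    ∑' i, t i * log (w i) - ∑' i, t i * log (t i) ≤ log F := by
  have := ht1.nonempty_of_ne_zero one_ne_zero
  have hF : 0 < F := hwF.pos hw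
  have hterm : ∀ i, t i * log (w i) - t i * log (t i) ≤ (w i / F - t i) + log F * t i := by
    intro i
    have := mul_log_sub_mul_log_le (ht i) (div_pos (hw i) hF)
    rw [log_div (hw i).ne' hF.ne'] at this
    linarith
  have hrhs := ((hwF.div_const_self hF.ne').sub ht1).add (ht1.mul_left (log F))
  rw [sub_self, zero_add, mul_one] at hrhs
  exact hasSum_le hterm (htw.hasSum.sub htt.hasSum) hrhs

theorem tsum_mul_log_sub_tsum_mul_log_div_eq [Nonempty ι] (hw : ∀ i, 0 < w i) (hwF : HasSum w F)
    (hw_log : Summable fun i => w i / F * log (w i)) :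
    ∑' i, w i / F * log (w i) - ∑' i, w i / F * log (w i / F) = log F := by
  have hF : 0 < F := hwF.pos hw
  have hterm : ∀ i, w i / F * log (w i / F) = w i / F * log (w i) - log F * (w i / F) := by
    intro i
    rw [log_div (hw i).ne' hF.ne']
    ring
  simp_rw [hterm]
  rw [(hw_log.hasSum.sub ((hwF.div_const_self hF.ne').mul_left (log F))).tsum_eq, mul_one]
  ring

end Gibbs

lemma summable_mul_of_abs_le {ι : Type*} {c t : ι → ℝ} {M : ℝ} (hc : ∀ i, |c i| ≤ M)
    (ht : Summable t) : Summable fun i => c i * t i :=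
  Summable.of_norm_bounded (ht.abs.mul_left M) fun i => by
    rw [Real.norm_eq_abs, abs_mul]
    exact mul_le_mul_of_nonneg_right (hc i) (abs_nonneg _)

lemma summable_mul_log_of_summable_natCast_mul {t : ℕ → ℝ} (ht0 : ∀ n, 0 ≤ t n)
    (ht1 : ∀ n, t n ≤ 1) (hnt : Summable fun n : ℕ => (n : ℝ) * t n) :
    Summable fun n => t n * log (t n) := by
  refine Summable.of_norm_bounded (summable_exp_neg_nat.add hnt) fun n => ?_
  have hnonpos : t n * log (t n) ≤ 0 := mul_nonpos_of_nonneg_of_nonpos (ht0 n)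
    (log_nonpos (ht0 n) (ht1 n))
  -- `-t log t ≤ e^{-n} + n t`: Gibbs' inequality against `s = e^{-n}`
  have hgibbs := mul_log_sub_mul_log_le (ht0 n) (exp_pos (-n))
  rw [log_exp] at hgibbs
  rw [Real.norm_eq_abs, abs_of_nonpos hnonpos]
  linarith [ht0 n]

lemma summable_pow_mul_exp_mul_pow {c : ℕ → ℝ} {M r : ℝ} (hc : ∀ n, c n ≤ M) (hr0 : 0 ≤ r)
    (hr1 : r < 1) (k : ℕ) : Summable fun n : ℕ => (n : ℝ) ^ k * (exp (c n) * r ^ n) := by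
  have hgeom := (summable_pow_mul_geometric_of_norm_lt_one k
    (by rwa [Real.norm_eq_abs, abs_of_nonneg hr0] : ‖r‖ < 1)).mul_left (exp M)
  refine Summable.of_nonneg_of_le (fun n => by positivity) (fun n => ?_) hgeom
  calc (n : ℝ) ^ k * (exp (c n) * r ^ n) ≤ (n : ℝ) ^ k * (exp M * r ^ n) := by
        gcongr
        exact hc n
    _ = exp M * ((n : ℝ) ^ k * r ^ n) := by ring

lemma hasSum_mul_log_exp_mul_pow {c t : ℕ → ℝ} {r : ℝ} (hr : 0 < r)
    (hct : Summable fun n => c n * t n) (hnt : Summable fun n : ℕ => (n : ℝ) * t n) :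
    HasSum (fun n => t n * log (exp (c n) * r ^ n))
      (∑' n, c n * t n + log r * ∑' n : ℕ, (n : ℝ) * t n) := by
  convert hct.hasSum.add (hnt.hasSum.mul_left (log r)) using 1
  ext n
  rw [log_mul (exp_pos _).ne' (pow_pos hr n).ne', log_exp, log_pow]
  ring

theorem tsum_mul_add_log_mul_tsum_sub_tsum_mul_log_le {c t : ℕ → ℝ} {M r F : ℝ}
    (hM : ∀ n, |c n| ≤ M) (hr : 0 < r) (hF : HasSum (fun n => exp (c n) * r ^ n) F)
    (ht0 : ∀ n, 0 ≤ t n) (ht1 : HasSum t 1) (hnt : Summable fun n : ℕ => (n : ℝ) * t n) :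
    Summable (fun n => c n * t n) ∧ Summable (fun n => t n * log (t n)) ∧
      ∑' n, c n * t n + log r * ∑' n : ℕ, (n : ℝ) * t n - ∑' n, t n * log (t n) ≤ log F := by
  have hct := summable_mul_of_abs_le hM ht1.summable
  have htt := summable_mul_log_of_summable_natCast_mul ht0
    (fun n => le_hasSum ht1 n fun j _ => ht0 j) hnt
  have hsplit := hasSum_mul_log_exp_mul_pow hr hct hnt
  refine ⟨hct, htt, ?_⟩
  rw [← hsplit.tsum_eq]
  exact tsum_mul_log_sub_tsum_mul_log_le (fun n => by positivity) hF ht0 ht1 hsplit.summable htt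

/-- For a bounded real sequence `c` and `r ∈ (0,1)`: for every probability
sequence `t` with finite first moment, the series `Σ c_n t_n`, `Σ n t_n`, `Σ t_n ln t_n`
all converge and `Σ c_n t_n + (ln r)·Σ n t_n − Σ t_n ln t_n ≤ ln f_c(r)` where
`f_c(r) = Σ e^{c_n} rⁿ`; and the maximum is attained at `t_n = e^{c_n} rⁿ / f_c(r)`. -/
theorem stmt9 (c : ℕ → ℝ) (hc : ∃ M, ∀ n, |c n| ≤ M)
    (r : ℝ) (hr : r ∈ Set.Ioo (0 : ℝ) 1)
    (F : ℝ) (hF : F = ∑' m : ℕ, Real.exp (c m) * r ^ m) :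
    (∀ t : ℕ → ℝ, (∀ n, 0 ≤ t n) → HasSum t 1 →
      Summable (fun n : ℕ => (n : ℝ) * t n) →
      Summable (fun n => c n * t n) ∧
      Summable (fun n => t n * Real.log (t n)) ∧
      ∑' n, c n * t n + Real.log r * ∑' n : ℕ, (n : ℝ) * t n
          - ∑' n, t n * Real.log (t n) ≤ Real.log F) ∧
    ((∀ n : ℕ, 0 ≤ Real.exp (c n) * r ^ n / F) ∧
      HasSum (fun n : ℕ => Real.exp (c n) * r ^ n / F) 1 ∧
      Summable (fun n : ℕ => (n : ℝ) * (Real.exp (c n) * r ^ n / F)) ∧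
      ∑' n : ℕ, c n * (Real.exp (c n) * r ^ n / F)
          + Real.log r * ∑' n : ℕ, (n : ℝ) * (Real.exp (c n) * r ^ n / F)
          - ∑' n : ℕ, (Real.exp (c n) * r ^ n / F)
              * Real.log (Real.exp (c n) * r ^ n / F)
        = Real.log F) := by
  obtain ⟨M, hM⟩ := hc
  obtain ⟨hr0, hr1⟩ := hr
  have hcM : ∀ n, c n ≤ M := fun n => (abs_le.1 (hM n)).2
  have hw : ∀ n, 0 < exp (c n) * r ^ n := fun n => by positivity
  have hwF : HasSum (fun n => exp (c n) * r ^ n) F :=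
    hF ▸ (by simpa using summable_pow_mul_exp_mul_pow hcM hr0.le hr1 0 : Summable _).hasSum
  have hFpos : 0 < F := hwF.pos hw
  have hp1 : HasSum (fun n => exp (c n) * r ^ n / F) 1 := hwF.div_const_self hFpos.ne'
  have hnp : Summable fun n : ℕ => (n : ℝ) * (exp (c n) * r ^ n / F) :=
    ((summable_pow_mul_exp_mul_pow hcM hr0.le hr1 1).div_const F).congr fun n => by ring
  refine ⟨fun _ ht0 ht1 hnt =>
      tsum_mul_add_log_mul_tsum_sub_tsum_mul_log_le hM hr0 hwF ht0 ht1 hnt,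
    fun n => (div_pos (hw n) hFpos).le, hp1, hnp, ?_⟩
  have hsplit := hasSum_mul_log_exp_mul_pow hr0 (summable_mul_of_abs_le hM hp1.summable) hnp
  rw [← hsplit.tsum_eq]
  exact tsum_mul_log_sub_tsum_mul_log_div_eq hw hwF hsplit.summable
end

section
/- Let E be a real vector space, C ⊆ E a convex set, and f : E → ℝ convex on C. Let e₀ = (1,0,0,…) ∈ l¹ and define D = {(t, μ) ∈ l¹ × E : t is a probability sequence with Σ n·t_n < ∞, t ≠ e₀, and μ/(Σ_{n=0}^∞ n·t_n) ∈ C}. Then D is a convex subset of l¹ × E, and the function (t, μ) ↦ (Σ_{n=0}^∞ n·t_n)·f(μ/(Σ_{n=0}^∞ n·t_n)) + Σ_{n=0}^∞ t_n ln t_n is convex on D. -/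
/-!
With `m(t) = ∑ n tₙ`, the first summand is the perspective `(s, x) ↦ s f(x / s)` of `f`
evaluated at `(m(t), μ)`. Perspectives of convex functions are convex, and `m` is affine on
probability sequences with finite mean, so the first summand is convex. The entropy
`∑ tₙ log tₙ` is a sum of convex functions of the coordinates; it converges because
`-t log t ≤ n t + e^{-n-1}`. Finally `t ≠ e₀` exactly when `m(t) > 0`, a convex condition.
-/

open Real Set

section Perspective

variable {E : Type*} [AddCommGroup E] [Module ℝ E]

lemma inv_smul_add_smul_eq_combo {s u a b : ℝ} (hs : s ≠ 0) (hu : u ≠ 0)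
    (hc : a * s + b * u ≠ 0) (x y : E) :
    (a * s + b * u)⁻¹ • (a • x + b • y) =
      (a * s / (a * s + b * u)) • (s⁻¹ • x) + (b * u / (a * s + b * u)) • (u⁻¹ • y) := by
  rw [smul_add, smul_smul, smul_smul, smul_smul, smul_smul]
  congr 2 <;> field_simp

lemma perspective_weights {s u a b : ℝ} (hs : 0 < s) (hu : 0 < u) (ha : 0 ≤ a) (hb : 0 ≤ b)
    (hab : a + b = 1) :
    0 < a * s + b * u ∧ 0 ≤ a * s / (a * s + b * u) ∧ 0 ≤ b * u / (a * s + b * u) ∧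
      a * s / (a * s + b * u) + b * u / (a * s + b * u) = 1 := by
  have hc : 0 < a * s + b * u := by
    rcases ha.eq_or_lt with rfl | ha'
    · simpa [show b = 1 by linarith] using hu
    · positivity
  exact ⟨hc, by positivity, by positivity, by rw [← add_div, div_self hc.ne']⟩

theorem Convex.perspective {C : Set E} (hC : Convex ℝ C) :
    Convex ℝ {p : ℝ × E | 0 < p.1 ∧ p.1⁻¹ • p.2 ∈ C} := by
  rintro ⟨s, x⟩ ⟨hs, hx⟩ ⟨u, y⟩ ⟨hu, hy⟩ a b ha hb hab
  obtain ⟨hc, hw₁, hw₂, hw⟩ := perspective_weights hs hu ha hb hab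
  refine ⟨hc, ?_⟩
  simp only [Prod.fst_add, Prod.snd_add, Prod.smul_fst, Prod.smul_snd, smul_eq_mul]
  rw [inv_smul_add_smul_eq_combo hs.ne' hu.ne' hc.ne']
  exact hC hx hy hw₁ hw₂ hw

theorem ConvexOn.perspective {C : Set E} {f : E → ℝ} (hf : ConvexOn ℝ C f) :
    ConvexOn ℝ {p : ℝ × E | 0 < p.1 ∧ p.1⁻¹ • p.2 ∈ C} fun p => p.1 * f (p.1⁻¹ • p.2) := by
  refine ⟨hf.1.perspective, ?_⟩
  rintro ⟨s, x⟩ ⟨hs, hx⟩ ⟨u, y⟩ ⟨hu, hy⟩ a b ha hb hab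
  obtain ⟨hc, hw₁, hw₂, hw⟩ := perspective_weights hs hu ha hb hab
  simp only [Prod.fst_add, Prod.snd_add, Prod.smul_fst, Prod.smul_snd, smul_eq_mul]
  rw [inv_smul_add_smul_eq_combo hs.ne' hu.ne' hc.ne']
  calc (a * s + b * u) * f ((a * s / (a * s + b * u)) • (s⁻¹ • x) +
          (b * u / (a * s + b * u)) • (u⁻¹ • y))
      ≤ (a * s + b * u) * ((a * s / (a * s + b * u)) • f (s⁻¹ • x) +
          (b * u / (a * s + b * u)) • f (u⁻¹ • y)) :=
        mul_le_mul_of_nonneg_left (hf.2 hx hy hw₁ hw₂ hw) hc.le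
    _ = a * (s * f (s⁻¹ • x)) + b * (u * f (u⁻¹ • y)) := by
        simp only [smul_eq_mul]; field_simp

end Perspective

theorem ConvexOn.comp_of_map_combo {𝕜 α β γ : Type*} [Semiring 𝕜] [PartialOrder 𝕜]
    [AddCommMonoid α] [AddCommMonoid β] [AddCommMonoid γ] [PartialOrder γ] [SMul 𝕜 α]
    [SMul 𝕜 β] [SMul 𝕜 γ] {s : Set α} {t : Set β} {f : β → γ} {g : α → β}
    (hf : ConvexOn 𝕜 t f) (hs : Convex 𝕜 s) (hst : MapsTo g s t)
    (hg : ∀ ⦃x⦄, x ∈ s → ∀ ⦃y⦄, y ∈ s → ∀ ⦃a b : 𝕜⦄, 0 ≤ a → 0 ≤ b → a + b = 1 →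
      g (a • x + b • y) = a • g x + b • g y) :
    ConvexOn 𝕜 s (f ∘ g) :=
  ⟨hs, fun x hx y hy a b ha hb hab => by
    simpa only [Function.comp_apply, hg hx hy ha hb hab] using
      hf.2 (hst hx) (hst hy) ha hb hab⟩

theorem ConvexOn.tsum_comp {ι : Type*} {I : Set ℝ} {g : ℝ → ℝ} (hg : ConvexOn ℝ I g)
    {s : Set (ι → ℝ)} (hs : Convex ℝ s) (hsI : ∀ t ∈ s, ∀ i, t i ∈ I)
    (hsum : ∀ t ∈ s, Summable fun i => g (t i)) :
    ConvexOn ℝ s fun t => ∑' i, g (t i) := by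
  refine ⟨hs, fun x hx y hy a b ha hb hab => ?_⟩
  have hx' := hsum x hx
  have hy' := hsum y hy
  calc ∑' i, g ((a • x + b • y) i)
      ≤ ∑' i, (a * g (x i) + b * g (y i)) :=
        (hsum _ (hs hx hy ha hb hab)).tsum_le_tsum
          (fun i => hg.2 (hsI x hx i) (hsI y hy i) ha hb hab)
          ((hx'.mul_left a).add (hy'.mul_left b))
    _ = a • ∑' i, g (x i) + b • ∑' i, g (y i) := by
        rw [(hx'.mul_left a).tsum_add (hy'.mul_left b), tsum_mul_left, tsum_mul_left]; rfl

-- Fenchel–Young inequality: the convex conjugate of `t ↦ t log t` is `y ↦ exp (y - 1)`.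
lemma Real.neg_mul_log_le (y : ℝ) {t : ℝ} (ht : 0 ≤ t) : -(t * log t) ≤ y * t + exp (-y - 1) := by
  rcases ht.eq_or_lt with rfl | ht
  · simpa using (exp_pos _).le
  · have h := one_sub_inv_le_log_of_pos (mul_pos ht (exp_pos (y + 1)))
    rw [log_mul ht.ne' (exp_pos _).ne', log_exp, mul_inv, ← exp_neg] at h
    have := mul_le_mul_of_nonneg_left h ht.le
    rw [show -y - 1 = -(y + 1) by ring]
    field_simp at this ⊢
    nlinarith [this]

noncomputable def mean (t : ℕ → ℝ) : ℝ := ∑' n : ℕ, (n : ℝ) * t n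

def finiteMeanProbSeqs : Set (ℕ → ℝ) :=
  {t | (∀ n, 0 ≤ t n) ∧ ∑' n, t n = 1 ∧ Summable fun n : ℕ => (n : ℝ) * t n}

lemma Summable.tsum_smul_add_smul {ι : Type*} {u v : ι → ℝ} (hu : Summable u) (hv : Summable v)
    (a b : ℝ) : ∑' i, (a • u + b • v) i = a * ∑' i, u i + b * ∑' i, v i := by
  simp only [Pi.add_apply, Pi.smul_apply, smul_eq_mul]
  rw [(hu.mul_left a).tsum_add (hv.mul_left b), tsum_mul_left, tsum_mul_left]

lemma mean_smul_add_smul {t s : ℕ → ℝ} (ht : Summable fun n : ℕ => (n : ℝ) * t n)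
    (hs : Summable fun n : ℕ => (n : ℝ) * s n) (a b : ℝ) :
    mean (a • t + b • s) = a * mean t + b * mean s := by
  have h : (fun n : ℕ => (n : ℝ) * (a • t + b • s) n) =
      a • (fun n : ℕ => (n : ℝ) * t n) + b • fun n : ℕ => (n : ℝ) * s n := by
    funext n; simp only [Pi.add_apply, Pi.smul_apply, smul_eq_mul]; ring
  unfold mean
  rw [h, ht.tsum_smul_add_smul hs]

lemma mean_single_zero : mean (Pi.single 0 1) = 0 := by
  simp [mean, Pi.single_apply]

namespace finiteMeanProbSeqs

variable {t : ℕ → ℝ}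

lemma summable (ht : t ∈ finiteMeanProbSeqs) : Summable t := by
  by_contra h
  exact zero_ne_one (tsum_eq_zero_of_not_summable h ▸ ht.2.1)

lemma le_one (ht : t ∈ finiteMeanProbSeqs) (n : ℕ) : t n ≤ 1 :=
  ht.2.1 ▸ (summable ht).le_tsum n fun m _ => ht.1 m

theorem convex : Convex ℝ finiteMeanProbSeqs := by
  rintro t ht s hs a b ha hb hab
  refine ⟨fun n => ?_, ?_, ?_⟩
  · simpa using add_nonneg (mul_nonneg ha (ht.1 n)) (mul_nonneg hb (hs.1 n))
  · rw [(summable ht).tsum_smul_add_smul (summable hs), ht.2.1, hs.2.1, mul_one, mul_one, hab]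
  · refine ((ht.2.2.mul_left a).add (hs.2.2.mul_left b)).congr fun n => ?_
    simp only [Pi.add_apply, Pi.smul_apply, smul_eq_mul]; ring

lemma mean_pos (ht : t ∈ finiteMeanProbSeqs) (hne : t ≠ Pi.single 0 1) : 0 < mean t := by
  obtain ⟨m, hm, htm⟩ : ∃ m, m ≠ 0 ∧ t m ≠ 0 := by
    by_contra! h
    refine hne (funext fun n => ?_)
    rcases eq_or_ne n 0 with rfl | hn
    · rw [← ht.2.1, tsum_eq_single 0 h, Pi.single_eq_same]
    · rw [h n hn, Pi.single_eq_of_ne hn]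
  calc 0 < (m : ℝ) * t m := mul_pos (by positivity) ((ht.1 m).lt_of_ne' htm)
    _ ≤ mean t := ht.2.2.le_tsum m fun n _ => mul_nonneg n.cast_nonneg (ht.1 n)

lemma summable_mul_log (ht : t ∈ finiteMeanProbSeqs) :
    Summable fun n => t n * log (t n) := by
  refine summable_neg_iff.1 (Summable.of_nonneg_of_le (fun n => ?_) (fun n => ?_)
    (ht.2.2.add (Real.summable_exp_neg_nat.mul_left (exp (-1)))))
  · exact neg_nonneg.2 <|
      mul_nonpos_of_nonneg_of_nonpos (ht.1 n) (log_nonpos (ht.1 n) (le_one ht n))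
  · simpa [← exp_add, sub_eq_add_neg, add_comm] using neg_mul_log_le (n : ℝ) (ht.1 n)

theorem convexOn_tsum_mul_log :
    ConvexOn ℝ finiteMeanProbSeqs fun t => ∑' n, t n * log (t n) :=
  convexOn_mul_log.tsum_comp convex (fun _ ht n => ht.1 n) fun _ => summable_mul_log

end finiteMeanProbSeqs

section Domain

variable {E : Type*} [AddCommGroup E] [Module ℝ E]

-- The domain `D` of the theorem, with `l¹` replaced by the space of all real sequences.
def seqDomain (C : Set E) : Set ((ℕ → ℝ) × E) :=
  {p | (∀ n, 0 ≤ p.1 n) ∧ ∑' n, p.1 n = 1 ∧ Summable (fun n : ℕ => (n : ℝ) * p.1 n) ∧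
    p.1 ≠ Pi.single 0 1 ∧ (mean p.1)⁻¹ • p.2 ∈ C}

lemma mapsTo_mean_seqDomain (C : Set E) :
    MapsTo (fun p => (mean p.1, p.2)) (seqDomain C) {q : ℝ × E | 0 < q.1 ∧ q.1⁻¹ • q.2 ∈ C} :=
  fun _ hp => ⟨finiteMeanProbSeqs.mean_pos ⟨hp.1, hp.2.1, hp.2.2.1⟩ hp.2.2.2.1, hp.2.2.2.2⟩

lemma mean_seqDomain_smul_add_smul {C : Set E} {p q : (ℕ → ℝ) × E} (hp : p ∈ seqDomain C)
    (hq : q ∈ seqDomain C) (a b : ℝ) :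
    (mean (a • p + b • q).1, (a • p + b • q).2) = a • (mean p.1, p.2) + b • (mean q.1, q.2) := by
  ext
  · exact mean_smul_add_smul hp.2.2.1 hq.2.2.1 a b
  · rfl

theorem convex_seqDomain {C : Set E} (hC : Convex ℝ C) : Convex ℝ (seqDomain C) := by
  intro p hp q hq a b ha hb hab
  have hr := finiteMeanProbSeqs.convex ⟨hp.1, hp.2.1, hp.2.2.1⟩ ⟨hq.1, hq.2.1, hq.2.2.1⟩ ha hb hab
  have hmean :=
    hC.perspective (mapsTo_mean_seqDomain C hp) (mapsTo_mean_seqDomain C hq) ha hb hab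
  rw [← mean_seqDomain_smul_add_smul hp hq] at hmean
  refine ⟨hr.1, hr.2.1, hr.2.2, fun h => ?_, hmean.2⟩
  exact hmean.1.ne' (by rw [h, mean_single_zero])

theorem ConvexOn.convexOn_seqDomain {C : Set E} {f : E → ℝ} (hf : ConvexOn ℝ C f) :
    ConvexOn ℝ (seqDomain C) fun p =>
      mean p.1 * f ((mean p.1)⁻¹ • p.2) + ∑' n, p.1 n * log (p.1 n) := by
  have hD := convex_seqDomain hf.1
  refine ConvexOn.add (hf.perspective.comp_of_map_combo hD (mapsTo_mean_seqDomain C)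
    fun p hp q hq a b _ _ _ => mean_seqDomain_smul_add_smul hp hq a b) ?_
  exact (finiteMeanProbSeqs.convexOn_tsum_mul_log.comp_linearMap (LinearMap.fst ℝ _ E)).subset
    (fun p hp => ⟨hp.1, hp.2.1, hp.2.2.1⟩) hD

end Domain

/-- Let `f` be convex on a convex set `C` in a real vector space `E`,
`e₀ = (1,0,0,…) ∈ l¹`, and
`D = {(t,μ) : t a probability sequence with Σ n t_n < ∞, t ≠ e₀, μ/(Σ n t_n) ∈ C}`.
Then `D` is convex and `(t,μ) ↦ (Σ n t_n)·f(μ/(Σ n t_n)) + Σ t_n ln t_n` is convex on `D`. -/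
theorem stmt14 {E : Type*} [AddCommGroup E] [Module ℝ E]
    (C : Set E) (f : E → ℝ) (hf : ConvexOn ℝ C f)
    (e₀ : ℕ → ℝ) (he₀ : ∀ n, e₀ n = if n = 0 then 1 else 0)
    (D : Set (lp (fun _ : ℕ => ℝ) 1 × E))
    (hD : D = {p | (∀ n, 0 ≤ p.1 n) ∧ (∑' n, p.1 n) = 1 ∧
      Summable (fun n : ℕ => (n : ℝ) * p.1 n) ∧
      (fun n => p.1 n) ≠ e₀ ∧
      (∑' n : ℕ, (n : ℝ) * p.1 n)⁻¹ • p.2 ∈ C}) :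
    Convex ℝ D ∧
    ConvexOn ℝ D (fun p =>
      (∑' n : ℕ, (n : ℝ) * p.1 n) * f ((∑' n : ℕ, (n : ℝ) * p.1 n)⁻¹ • p.2)
        + ∑' n, p.1 n * Real.log (p.1 n)) := by
  obtain rfl : e₀ = Pi.single 0 1 := funext fun n => by simp [he₀, Pi.single_apply]
  subst hD
  have h := hf.convexOn_seqDomain.comp_linearMap
    ((LinearMap.pi fun n => lp.evalₗ (𝕜 := ℝ) (fun _ : ℕ => ℝ) 1 n).prodMap LinearMap.id)
  exact ⟨h.1, h⟩
end
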